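/- The Hilbert-style propositional calculus consisting of axiom schemas 1–11 only (omitting double negation ¬¬A → A) together with modus ponens does not prove ¬¬P → P for a propositional variable P; equivalently, the schema 12 is independent of schemas 1–11. -/
import Mathlib


inductive Fml where
  | var : Nat → Fml
  | imp : Fml → Fml → Fml
  | and : Fml → Fml → Fml
  | or  : Fml → Fml → Fml
  | not : Fml → Fml

inductive Prov' : Fml → Prop where
  | ax1 (A B : Fml) : Prov' (A.imp (B.imp A))
  | ax2 (A B : Fml) : Prov' ((A.imp (A.imp B)).imp (A.imp B))
  | ax3 (A B C : Fml) : Prov' ((A.imp (B.imp C)).imp (B.imp (A.imp C)))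
  | ax4 (A B C : Fml) : Prov' ((B.imp C).imp ((A.imp B).imp (A.imp C)))
  | ax5 (A B : Fml) : Prov' ((A.and B).imp A)
  | ax6 (A B : Fml) : Prov' ((A.and B).imp B)
  | ax7 (A B : Fml) : Prov' (A.imp (B.imp (A.and B)))
  | ax8 (A B : Fml) : Prov' (A.imp (A.or B))
  | ax9 (A B : Fml) : Prov' (B.imp (A.or B))
  | ax10 (A B C : Fml) : Prov' (((A.imp C).and (B.imp C)).imp ((A.or B).imp C))
  | ax11 (A B : Fml) : Prov' ((A.imp (B.and B.not)).imp A.not)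
  | mp (A B : Fml) : Prov' (A.imp B) → Prov' A → Prov' B

def hyimp (a b : Fin 3) : Fin 3 := if a ≤ b then 2 else b
def hynot (a : Fin 3) : Fin 3 := if a = 0 then 2 else 0

def ev : Fml → Fin 3
  | Fml.var _ => 1
  | Fml.imp a b => hyimp (ev a) (ev b)
  | Fml.and a b => min (ev a) (ev b)
  | Fml.or a b => max (ev a) (ev b)
  | Fml.not a => hynot (ev a)

lemma ev_prov {A : Fml} (h : Prov' A) : ev A = 2 := by
  induction h with
  | ax1 A B => simp only [ev]; generalize ev A = a; generalize ev B = b; revert a b; decide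
  | ax2 A B => simp only [ev]; generalize ev A = a; generalize ev B = b; revert a b; decide
  | ax3 A B C => simp only [ev]; generalize ev A = a; generalize ev B = b; generalize ev C = c; revert a b c; decide
  | ax4 A B C => simp only [ev]; generalize ev A = a; generalize ev B = b; generalize ev C = c; revert a b c; decide
  | ax5 A B => simp only [ev]; generalize ev A = a; generalize ev B = b; revert a b; decide
  | ax6 A B => simp only [ev]; generalize ev A = a; generalize ev B = b; revert a b; decide
  | ax7 A B => simp only [ev]; generalize ev A = a; generalize ev B = b; revert a b; decide
  | ax8 A B => simp only [ev]; generalize ev A = a; generalize ev B = b; revert a b; decide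
  | ax9 A B => simp only [ev]; generalize ev A = a; generalize ev B = b; revert a b; decide
  | ax10 A B C => simp only [ev]; generalize ev A = a; generalize ev B = b; generalize ev C = c; revert a b c; decide
  | ax11 A B => simp only [ev]; generalize ev A = a; generalize ev B = b; revert a b; decide
  | mp A B hi ha ihi iha =>
      simp only [ev] at ihi
      rw [iha] at ihi
      generalize ev B = b at ihi ⊢
      revert ihi; revert b; decide

theorem dne_independent : ¬ Prov' (((Fml.var 0).not.not).imp (Fml.var 0)) := by
  intro h
  have := ev_prov h
  simp only [ev] at this
  exact absurd this (by decide)
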